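/- arXiv:1302.0521 — 2 statements merged into one kernel-verified Lean document; each statement's English description precedes it below -/
import Mathlib

section
/- If x is a quadratic irrational, then its continued fraction expansion is eventually periodic (Lagrange's theorem). -/
/-- The sequence of complete quotients of the continued fraction algorithm. -/
noncomputable def cfX (x : ℝ) : ℕ → ℝ
  | 0 => x
  | n + 1 =>
    if cfX x n - ⌊cfX x n⌋ = 0 then 0 else 1 / (cfX x n - ⌊cfX x n⌋)

/-- The partial quotients (continued fraction expansion) of a real number. -/
noncomputable def cfA (x : ℝ) (n : ℕ) : ℤ := ⌊cfX x n⌋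

/-!
The complete quotients `x_n` of `x` satisfy integer quadratics `Q_n` of one common discriminant `D`,
obtained from `Q_0 = (A, B, C)` by the substitutions `t ↦ a_n + 1 / t`. Running the conjugate root
`y` through the same substitutions, eventually `x_n > 1` and `-1 < y_n < 0`, and for such a
reduced pair all coefficients of `Q_n` have square at most `D`. Hence some `Q_n` repeats; a reduced
`x_n` is the only positive root of `Q_n`, so `x_n` repeats too and the expansion is periodic from
there on.
-/

section PartialQuotients

variable {w k : ℕ → ℝ}

lemma sub_lt_one_of_inv_sub (hk : ∀ n, 1 ≤ k n) (hw : ∀ n, k n < w n)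
    (hw_succ : ∀ n, w (n + 1) = (w n - k n)⁻¹) (n : ℕ) : w n - k n < 1 := by
  have hpos : 0 < w n - k n := sub_pos.2 (hw n)
  have : 1 < (w n - k n)⁻¹ := by linarith [hw_succ n ▸ hw (n + 1), hk (n + 1)]
  exact (one_lt_inv₀ hpos).1 this

lemma two_lt_mul_succ_of_inv_sub (hk : ∀ n, 1 ≤ k n) (hw : ∀ n, k n < w n)
    (hw_succ : ∀ n, w (n + 1) = (w n - k n)⁻¹) (n : ℕ) : 2 < w n * w (n + 1) := by
  have hpos : 0 < w n - k n := sub_pos.2 (hw n)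
  have hlt := sub_lt_one_of_inv_sub hk hw hw_succ n
  rw [hw_succ n, lt_mul_inv_iff₀ hpos]
  linarith [hk n]

end PartialQuotients

/-- The gap `|u n - v n|` stays below `1` but at least quadruples every two steps. -/
theorem eq_of_common_partial_quotients {u v k : ℕ → ℝ} (hk : ∀ n, 1 ≤ k n)
    (hu : ∀ n, k n < u n) (hv : ∀ n, k n < v n)
    (hu_succ : ∀ n, u (n + 1) = (u n - k n)⁻¹)
    (hv_succ : ∀ n, v (n + 1) = (v n - k n)⁻¹) : u 0 = v 0 := by
  set d : ℕ → ℝ := fun n ↦ |u n - v n|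
  have hd_lt : ∀ n, d n < 1 := fun n ↦ abs_sub_lt_iff.2
    ⟨by linarith [hv n, sub_lt_one_of_inv_sub hk hu hu_succ n],
     by linarith [hu n, sub_lt_one_of_inv_sub hk hv hv_succ n]⟩
  have hd_succ : ∀ n, d (n + 1) = d n * (u (n + 1) * v (n + 1)) := by
    intro n
    have hu0 : u n - k n ≠ 0 := (sub_pos.2 (hu n)).ne'
    have hv0 : v n - k n ≠ 0 := (sub_pos.2 (hv n)).ne'
    have hpos : 0 < u (n + 1) * v (n + 1) := by nlinarith [hu (n + 1), hv (n + 1), hk (n + 1)]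
    have : u (n + 1) - v (n + 1) = (v n - u n) * (u (n + 1) * v (n + 1)) := by
      rw [hu_succ, hv_succ]; field_simp; ring
    simp only [d, this, abs_mul, abs_sub_comm (v n), abs_of_pos hpos]
  have hd_growth : ∀ n, 4 * d n ≤ d (n + 2) := by
    intro n
    have hu2 := two_lt_mul_succ_of_inv_sub hk hu hu_succ (n + 1)
    have hv2 := two_lt_mul_succ_of_inv_sub hk hv hv_succ (n + 1)
    have h4 : (4 : ℝ) ≤ u (n + 1) * u (n + 2) * (v (n + 1) * v (n + 2)) := by nlinarith
    rw [hd_succ, hd_succ, mul_assoc, mul_mul_mul_comm]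
    exact mul_comm (d n) 4 ▸ mul_le_mul_of_nonneg_left h4 (abs_nonneg _)
  have hd_pow : ∀ m, 4 ^ m * d 0 ≤ d (2 * m) := by
    intro m
    induction m with
    | zero => simp
    | succ m ih =>
      rw [pow_succ, mul_comm _ 4, mul_assoc, mul_add_one]
      linarith [hd_growth (2 * m)]
  by_contra hne
  have hd0 : 0 < d 0 := abs_pos.2 (sub_ne_zero.2 hne)
  obtain ⟨m, hm⟩ := pow_unbounded_of_one_lt (d 0)⁻¹ (by norm_num : (1 : ℝ) < 4)
  have := (inv_lt_iff_one_lt_mul₀ hd0).1 hm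
  linarith [hd_pow m, hd_lt (2 * m)]

section ContinuedFraction

variable {x : ℝ}

lemma cfX_add (x : ℝ) (m n : ℕ) : cfX x (m + n) = cfX (cfX x m) n := by
  induction n with
  | zero => rfl
  | succ n ih => rw [← add_assoc, cfX, cfX, ih]

lemma cfA_add_eq_of_cfX_eq {k p : ℕ} (h : cfX x (k + p) = cfX x k) {n : ℕ} (hn : k ≤ n) :
    cfA x (n + p) = cfA x n := by
  obtain ⟨t, rfl⟩ := Nat.exists_eq_add_of_le hn
  rw [cfA, cfA, add_right_comm, cfX_add, h, ← cfX_add]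

lemma irrational_cfX (hx : Irrational x) (n : ℕ) : Irrational (cfX x n) := by
  induction n with
  | zero => exact hx
  | succ n ih =>
    have hfr : Irrational (cfX x n - ⌊cfX x n⌋) := ih.sub_intCast _
    rw [cfX, if_neg hfr.ne_zero, one_div]
    exact hfr.inv

lemma cfA_lt_cfX (hx : Irrational x) (n : ℕ) : (cfA x n : ℝ) < cfX x n :=
  (Int.floor_le _).lt_of_ne ((irrational_cfX hx n).ne_int _).symm

lemma cfX_succ (hx : Irrational x) (n : ℕ) : cfX x (n + 1) = (cfX x n - cfA x n)⁻¹ := by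
  rw [cfX, ← cfA, if_neg (sub_pos.2 (cfA_lt_cfX hx n)).ne', one_div]

lemma one_lt_cfX_succ (hx : Irrational x) (n : ℕ) : 1 < cfX x (n + 1) := by
  rw [cfX_succ hx, one_lt_inv₀ (sub_pos.2 (cfA_lt_cfX hx n))]
  linarith [Int.lt_floor_add_one (cfX x n), show (cfA x n : ℝ) = ⌊cfX x n⌋ from rfl]

lemma one_le_cfA_succ (hx : Irrational x) (n : ℕ) : (1 : ℝ) ≤ cfA x (n + 1) := by
  exact_mod_cast Int.le_floor.2 (by exact_mod_cast (one_lt_cfX_succ hx n).le)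

end ContinuedFraction

section IntegerQuadratics

noncomputable def quadEval (q : ℤ × ℤ × ℤ) (t : ℝ) : ℝ :=
  q.1 * t ^ 2 + q.2.1 * t + q.2.2

def quadDiscr (q : ℤ × ℤ × ℤ) : ℤ := discrim q.1 q.2.1 q.2.2

/-- Chosen so that `t ^ 2 * quadEval (quadShift k q) t⁻¹ = quadEval q (k + t)`. -/
def quadShift (k : ℤ) (q : ℤ × ℤ × ℤ) : ℤ × ℤ × ℤ :=
  (q.1 * k ^ 2 + q.2.1 * k + q.2.2, 2 * q.1 * k + q.2.1, q.1)

lemma quadDiscr_quadShift (k : ℤ) (q : ℤ × ℤ × ℤ) :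
    quadDiscr (quadShift k q) = quadDiscr q := by
  simp only [quadDiscr, quadShift, discrim]
  ring

lemma quadEval_quadShift_inv_sub (k : ℤ) (q : ℤ × ℤ × ℤ) {t : ℝ} (ht : t ≠ k) :
    quadEval (quadShift k q) (t - k)⁻¹ = quadEval q t / (t - k) ^ 2 := by
  have : t - k ≠ 0 := sub_ne_zero.2 ht
  simp only [quadEval, quadShift]
  push_cast
  field_simp
  ring

def coeffBox (D : ℤ) : Set (ℤ × ℤ × ℤ) :=
  {q | q.1 ^ 2 ≤ D ∧ q.2.1 ^ 2 ≤ D ∧ q.2.2 ^ 2 ≤ D}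

/-- Galois' notion of a reduced quadratic irrational `r` with conjugate `s`. -/
def IsReducedPair (r s : ℝ) : Prop := 1 < r ∧ s ∈ Set.Ioo (-1) 0

variable {q : ℤ × ℤ × ℤ} {r s : ℝ}

lemma coeffs_eq_of_quadEval_eq_zero (hr : quadEval q r = 0) (hs : quadEval q s = 0)
    (hrs : r ≠ s) : (q.2.1 : ℝ) = -q.1 * (r + s) ∧ (q.2.2 : ℝ) = q.1 * r * s := by
  unfold quadEval at hr hs
  have hfac : (r - s) * (q.1 * (r + s) + q.2.1) = 0 := by linear_combination hr - hs
  have hb := (mul_eq_zero.1 hfac).resolve_left (sub_ne_zero.2 hrs)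
  exact ⟨by linear_combination hb, by linear_combination hr - r * hb⟩

lemma quadDiscr_eq_of_quadEval_eq_zero (hr : quadEval q r = 0) (hs : quadEval q s = 0)
    (hrs : r ≠ s) : (quadDiscr q : ℝ) = q.1 ^ 2 * (r - s) ^ 2 := by
  obtain ⟨hb, hc⟩ := coeffs_eq_of_quadEval_eq_zero hr hs hrs
  simp only [quadDiscr, discrim]
  push_cast
  rw [hb, hc]
  ring

lemma eq_of_quadEval_eq_zero_of_pos {r' : ℝ} (hq : q.1 ≠ 0) (hr : quadEval q r = 0)
    (hs : quadEval q s = 0) (hr' : quadEval q r' = 0) (hr0 : 0 < r) (hs0 : s < 0)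
    (hr'0 : 0 < r') : r' = r := by
  obtain ⟨hb, hc⟩ := coeffs_eq_of_quadEval_eq_zero hr hs (by linarith)
  have hfac : (q.1 : ℝ) * ((r' - s) * (r' - r)) = 0 := by
    unfold quadEval at hr'
    rw [hb, hc] at hr'
    linear_combination hr'
  have := (mul_eq_zero.1 hfac).resolve_left (Int.cast_ne_zero.2 hq)
  linarith [(mul_eq_zero.1 this).resolve_left (by linarith)]

lemma mem_coeffBox_quadDiscr (hr : quadEval q r = 0) (hs : quadEval q s = 0)
    (hred : IsReducedPair r s) : q ∈ coeffBox (quadDiscr q) := by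
  obtain ⟨hr1, hs1, hs0⟩ := hred
  have hrs : r ≠ s := by linarith
  have hD := quadDiscr_eq_of_quadEval_eq_zero hr hs hrs
  obtain ⟨hb, hc⟩ := coeffs_eq_of_quadEval_eq_zero hr hs hrs
  have ha2 : (0 : ℝ) ≤ q.1 ^ 2 := sq_nonneg _
  refine ⟨?_, ?_, ?_⟩ <;> rw [← Int.cast_le (R := ℝ)] <;> push_cast <;> rw [hD]
  · nlinarith [mul_le_mul_of_nonneg_left (show (1 : ℝ) ≤ (r - s) ^ 2 by nlinarith) ha2]
  · rw [hb]
    nlinarith [mul_le_mul_of_nonneg_left (show (r + s) ^ 2 ≤ (r - s) ^ 2 by nlinarith) ha2]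
  · rw [hc]
    have hrs2 : (r * s) ^ 2 ≤ (r - s) ^ 2 := by
      have h0 : 0 ≤ -(r * s) := by nlinarith
      have h1 : -(r * s) ≤ r - s := by nlinarith
      nlinarith [mul_le_mul h1 h1 h0 (by linarith)]
    nlinarith [mul_le_mul_of_nonneg_left hrs2 ha2]

lemma finite_coeffBox (D : ℤ) : (coeffBox D).Finite := by
  have hS : {z : ℤ | z ^ 2 ≤ D}.Finite := (Set.finite_Icc (-D) D).subset fun z hz ↦
    ⟨by nlinarith [Int.le_self_sq (-z), hz.out], by nlinarith [Int.le_self_sq z, hz.out]⟩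
  exact hS.prod (hS.prod hS)

lemma exists_irrational_conj_root (hq : q.1 ≠ 0) (hr : Irrational r)
    (hqr : quadEval q r = 0) : ∃ s, Irrational s ∧ r ≠ s ∧ quadEval q s = 0 := by
  have hq' : (q.1 : ℝ) ≠ 0 := Int.cast_ne_zero.2 hq
  refine ⟨((-q.2.1 / q.1 : ℚ) : ℝ) - r, hr.ratCast_sub _,
    fun h ↦ hr ⟨-q.2.1 / (2 * q.1), ?_⟩, ?_⟩
  · rw [eq_sub_iff_add_eq] at h
    push_cast at h ⊢
    field_simp at h ⊢
    linarith
  · unfold quadEval at hqr ⊢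
    push_cast
    field_simp
    linear_combination (q.1 : ℝ) * hqr

end IntegerQuadratics

section Orbits

noncomputable def cfQuad (x : ℝ) (q : ℤ × ℤ × ℤ) : ℕ → ℤ × ℤ × ℤ
  | 0 => q
  | n + 1 => quadShift (cfA x n) (cfQuad x q n)

/-- Meant for `y` the algebraic conjugate of `x`; then `cfConj x y n` is the conjugate of
`cfX x n`. -/
noncomputable def cfConj (x y : ℝ) : ℕ → ℝ
  | 0 => y
  | n + 1 => (cfConj x y n - cfA x n)⁻¹

variable {x y : ℝ} {q : ℤ × ℤ × ℤ}

lemma quadDiscr_cfQuad (x : ℝ) (q : ℤ × ℤ × ℤ) (n : ℕ) :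
    quadDiscr (cfQuad x q n) = quadDiscr q := by
  induction n with
  | zero => rfl
  | succ n ih => rw [cfQuad, quadDiscr_quadShift, ih]

lemma quadEval_cfQuad_cfX (hx : Irrational x) (h : quadEval q x = 0) (n : ℕ) :
    quadEval (cfQuad x q n) (cfX x n) = 0 := by
  induction n with
  | zero => exact h
  | succ n ih =>
    rw [cfQuad, cfX_succ hx, quadEval_quadShift_inv_sub _ _ ((irrational_cfX hx n).ne_int _), ih,
      zero_div]

lemma irrational_cfConj (hy : Irrational y) (n : ℕ) : Irrational (cfConj x y n) := by
  induction n with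
  | zero => exact hy
  | succ n ih => exact (ih.sub_intCast _).inv

lemma quadEval_cfQuad_cfConj (hy : Irrational y) (h : quadEval q y = 0) (n : ℕ) :
    quadEval (cfQuad x q n) (cfConj x y n) = 0 := by
  induction n with
  | zero => exact h
  | succ n ih =>
    rw [cfQuad, cfConj, quadEval_quadShift_inv_sub _ _ ((irrational_cfConj hy n).ne_int _), ih,
      zero_div]

lemma cfX_ne_cfConj (hx : Irrational x) (hxy : x ≠ y) (n : ℕ) : cfX x n ≠ cfConj x y n := by
  induction n with
  | zero => exact hxy
  | succ n ih => rwa [cfX_succ hx, cfConj, Ne, inv_inj, sub_left_inj]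

lemma inv_sub_mem_Ioo {t k : ℝ} (ht : t < 0) (hk : 1 ≤ k) : (t - k)⁻¹ ∈ Set.Ioo (-1) 0 :=
  ⟨by rw [lt_inv_of_neg (by norm_num) (by linarith)]; linarith, inv_lt_zero.2 (by linarith)⟩

/-- If the orbit of `y` stayed nonnegative, `x` and `y` would share their partial quotients
from the first one on. -/
lemma exists_cfConj_succ_neg (hx : Irrational x) (hxy : x ≠ y) :
    ∃ n, cfConj x y (n + 1) < 0 := by
  by_contra! hnonneg
  have hk := one_le_cfA_succ hx
  have hlt : ∀ n, (cfA x (n + 1) : ℝ) < cfConj x y (n + 1) := by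
    intro n
    have hnext : (cfA x (n + 2) : ℝ) ≤ cfConj x y (n + 2) :=
      sub_nonneg.1 (inv_nonneg.1 (hnonneg (n + 2)))
    have hinv : 0 < (cfConj x y (n + 1) - cfA x (n + 1))⁻¹ := by
      rw [← cfConj]; linarith [hk (n + 1)]
    exact sub_pos.1 (inv_pos.1 hinv)
  exact cfX_ne_cfConj hx hxy 1 <| eq_of_common_partial_quotients hk
    (fun n ↦ cfA_lt_cfX hx (n + 1)) hlt (fun n ↦ cfX_succ hx (n + 1)) (fun _ ↦ rfl)

lemma exists_forall_ge_isReducedPair (hx : Irrational x) (hxy : x ≠ y) :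
    ∃ N, ∀ n ≥ N, IsReducedPair (cfX x n) (cfConj x y n) := by
  obtain ⟨m, hm⟩ := exists_cfConj_succ_neg hx hxy
  have hk := one_le_cfA_succ hx
  refine ⟨m + 2, fun n hn ↦ ⟨?_, ?_⟩⟩
  · obtain ⟨n, rfl⟩ := Nat.exists_eq_add_of_lt hn
    exact one_lt_cfX_succ hx _
  · induction n, hn using Nat.le_induction with
    | base => exact inv_sub_mem_Ioo hm (hk m)
    | succ n hn ih =>
      obtain ⟨n, rfl⟩ := Nat.exists_eq_add_of_lt hn
      exact inv_sub_mem_Ioo ih.2 (hk _)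

lemma cfQuad_fst_ne_zero (hx : Irrational x) (hy : Irrational y) (hxy : x ≠ y)
    (hqx : quadEval q x = 0) (hqy : quadEval q y = 0) (hq : q.1 ≠ 0) (n : ℕ) :
    (cfQuad x q n).1 ≠ 0 := by
  intro h0
  have hD := quadDiscr_eq_of_quadEval_eq_zero (quadEval_cfQuad_cfX hx hqx n)
    (quadEval_cfQuad_cfConj hy hqy n) (cfX_ne_cfConj hx hxy n)
  rw [quadDiscr_cfQuad, quadDiscr_eq_of_quadEval_eq_zero hqx hqy hxy, h0] at hD
  simp [hq, sub_eq_zero, hxy] at hD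

lemma cfQuad_mem_coeffBox (hx : Irrational x) (hy : Irrational y) (hqx : quadEval q x = 0)
    (hqy : quadEval q y = 0) {n : ℕ} (hred : IsReducedPair (cfX x n) (cfConj x y n)) :
    cfQuad x q n ∈ coeffBox (quadDiscr q) := by
  rw [← quadDiscr_cfQuad x q n]
  exact mem_coeffBox_quadDiscr (quadEval_cfQuad_cfX hx hqx n) (quadEval_cfQuad_cfConj hy hqy n)
    hred

lemma cfX_eq_of_cfQuad_eq (hx : Irrational x) (hy : Irrational y) (hxy : x ≠ y)
    (hqx : quadEval q x = 0) (hqy : quadEval q y = 0) (hq : q.1 ≠ 0) {m n : ℕ}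
    (hm : IsReducedPair (cfX x m) (cfConj x y m)) (hn : IsReducedPair (cfX x n) (cfConj x y n))
    (h : cfQuad x q m = cfQuad x q n) : cfX x m = cfX x n :=
  eq_of_quadEval_eq_zero_of_pos (cfQuad_fst_ne_zero hx hy hxy hqx hqy hq n)
    (quadEval_cfQuad_cfX hx hqx n) (quadEval_cfQuad_cfConj hy hqy n)
    (h ▸ quadEval_cfQuad_cfX hx hqx m) (by linarith [hn.1]) hn.2.2 (by linarith [hm.1])

end Orbits

/-- Lagrange: a quadratic irrational has eventually periodic continued fraction. -/
theorem quadratic_irrational_cf_eventually_periodic (x : ℝ) (hx : Irrational x)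
    (A B C : ℤ) (hA : A ≠ 0) (hroot : (A : ℝ) * x ^ 2 + (B : ℝ) * x + (C : ℝ) = 0) :
    ∃ k p : ℕ, 1 ≤ p ∧ ∀ n : ℕ, k ≤ n → cfA x (n + p) = cfA x n := by
  set q : ℤ × ℤ × ℤ := (A, B, C)
  have hqx : quadEval q x = 0 := hroot
  obtain ⟨y, hy, hxy, hqy⟩ := exists_irrational_conj_root (q := q) hA hx hqx
  obtain ⟨N, hN⟩ := exists_forall_ge_isReducedPair hx hxy
  have hbox : ∀ n, cfQuad x q (N + n) ∈ coeffBox (quadDiscr q) :=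
    fun n ↦ cfQuad_mem_coeffBox hx hy hqx hqy (hN _ le_self_add)
  obtain ⟨i, j, hij, hQ⟩ := Set.Finite.exists_lt_map_eq_of_forall_mem hbox (finite_coeffBox _)
  have hrepeat : cfX x (N + i + (j - i)) = cfX x (N + i) := by
    rw [show N + i + (j - i) = N + j by omega]
    exact cfX_eq_of_cfQuad_eq hx hy hxy hqx hqy hA (hN _ le_self_add) (hN _ le_self_add) hQ.symm
  exact ⟨N + i, j - i, by omega, fun n hn ↦ cfA_add_eq_of_cfX_eq hrepeat hn⟩
end

section
/- For every integer n > 1, the continued fraction of √(n²+2n-1) is [n; 1, n-1, 1, 2n repeated], so its period has length 4. -/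
/-!
Write `x = √(n² + 2n - 1)`, so `n < x < n + 1` and `x² - n² = 2n - 1`. Running the continued
fraction algorithm by hand, the complete quotients after `x` are
`(x + n)/(2n - 1)`, `(x + n - 1)/2`, `(x + n - 1)/(2n - 1)`, `x + n`, and then `(x + n)/(2n - 1)`
again; each step is the identity `(y - ⌊y⌋) · y' = 1`, a rearrangement of `x² = n² + 2n - 1`.
Their floors are `1, n - 1, 1, 2n`. Since each complete quotient determines the next, the
sequence is periodic from index 1 with period 4, and no smaller period is possible because
`2n` differs from `1` and `n - 1`.
-/

theorem cfX_succ_s13 (x : ℝ) (m : ℕ) : cfX x (m + 1) = (Int.fract (cfX x m))⁻¹ := by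
  rw [cfX, ← Int.self_sub_floor]
  split_ifs with h <;> simp [h]

theorem cfX_succ_eq_of_floor_eq {x y z : ℝ} {m : ℕ} {a : ℤ} (hm : cfX x m = y) (ha : ⌊y⌋ = a)
    (hz : (y - a) * z = 1) : cfX x (m + 1) = z := by
  rw [cfX_succ_s13, hm, ← Int.self_sub_floor, ha]
  exact inv_eq_of_mul_eq_one_right hz

theorem cfX_add_of_eq {x : ℝ} {m p : ℕ} (h : cfX x (m + p) = cfX x m) {i : ℕ} (hi : m ≤ i) :
    cfX x (i + p) = cfX x i := by
  induction i, hi using Nat.le_induction with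
  | base => exact h
  | succ i _ ih => rw [Nat.add_right_comm, cfX_succ_s13, ih, cfX_succ_s13]

theorem cfX_add_mul_of_eq {x : ℝ} {m p : ℕ} (h : cfX x (m + p) = cfX x m) {i : ℕ} (hi : m ≤ i)
    (k : ℕ) : cfX x (i + p * k) = cfX x i := by
  induction k with
  | zero => rfl
  | succ k ih => rw [Nat.mul_succ, ← add_assoc, cfX_add_of_eq h (by omega), ih]

theorem cfA_add_mul_of_eq {x : ℝ} {m p : ℕ} (h : cfX x (m + p) = cfX x m) {i : ℕ} (hi : m ≤ i)
    (k : ℕ) : cfA x (i + p * k) = cfA x i :=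
  congrArg Int.floor (cfX_add_mul_of_eq h hi k)

theorem sInf_periods_eq {α : Type*} (a : ℕ → α) {p : ℕ} (hp : 0 < p)
    (hper : ∀ m, 1 ≤ m → a (m + p) = a m) (hmin : ∀ q, 0 < q → q < p → a p ≠ a (p - q)) :
    sInf {q : ℕ | 0 < q ∧ ∀ m : ℕ, 1 ≤ m → a (m + q) = a m} = p := by
  refine le_antisymm (Nat.sInf_le ⟨hp, hper⟩) (le_csInf ⟨p, hp, hper⟩ ?_)
  rintro q ⟨hq, hqper⟩
  by_contra! hqp
  exact hmin q hq hqp (by simpa [Nat.sub_add_cancel hqp.le] using hqper (p - q) (by omega))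

section

variable {n : ℕ} {x : ℝ}

theorem natCast_lt_and_lt_add_one_of_sq_eq (hn : 1 ≤ n) (hx0 : 0 ≤ x)
    (hx : x ^ 2 = n ^ 2 + (2 * n - 1)) : (n : ℝ) < x ∧ x < n + 1 := by
  have hn' : (1 : ℝ) ≤ n := by exact_mod_cast hn
  constructor <;> nlinarith

theorem floor_complete_quotients_of_sq_eq (hn : 1 < n) (hx0 : 0 ≤ x)
    (hx : x ^ 2 = n ^ 2 + (2 * n - 1)) :
    ⌊x⌋ = n ∧ ⌊(x + n) / (2 * n - 1)⌋ = 1 ∧ ⌊(x + n - 1) / 2⌋ = n - 1 ∧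
      ⌊(x + n - 1) / (2 * n - 1)⌋ = 1 ∧ ⌊x + n⌋ = 2 * n := by
  obtain ⟨hlo, hhi⟩ := natCast_lt_and_lt_add_one_of_sq_eq hn.le hx0 hx
  have hn' : (2 : ℝ) ≤ n := by exact_mod_cast hn
  have hd : (0 : ℝ) < 2 * n - 1 := by linarith
  simp only [Int.floor_eq_iff, le_div_iff₀ hd, div_lt_iff₀ hd,
    le_div_iff₀ (two_pos : (0 : ℝ) < 2), div_lt_iff₀ (two_pos : (0 : ℝ) < 2)]
  push_cast
  refine ⟨⟨?_, ?_⟩, ⟨?_, ?_⟩, ⟨?_, ?_⟩, ⟨?_, ?_⟩, ⟨?_, ?_⟩⟩ <;> linarith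

theorem cfX_complete_quotients_of_sq_eq (hn : 1 < n) (hx0 : 0 ≤ x)
    (hx : x ^ 2 = n ^ 2 + (2 * n - 1)) :
    cfX x 1 = (x + n) / (2 * n - 1) ∧ cfX x 2 = (x + n - 1) / 2 ∧
      cfX x 3 = (x + n - 1) / (2 * n - 1) ∧ cfX x 4 = x + n ∧ cfX x 5 = cfX x 1 := by
  obtain ⟨f0, f1, f2, f3, f4⟩ := floor_complete_quotients_of_sq_eq hn hx0 hx
  -- `field_simp` normalises the denominator `2 * n - 1` to `n * 2 - 1`
  have hd : (n * 2 - 1 : ℝ) ≠ 0 := by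
    have : (2 : ℝ) ≤ n := by exact_mod_cast hn
    linarith
  have h1 : cfX x 1 = (x + n) / (2 * n - 1) :=
    cfX_succ_eq_of_floor_eq (y := x) (m := 0) rfl f0
      (by push_cast; field_simp; linear_combination hx)
  have h2 : cfX x 2 = (x + n - 1) / 2 :=
    cfX_succ_eq_of_floor_eq h1 f1 (by push_cast; field_simp; linear_combination hx)
  have h3 : cfX x 3 = (x + n - 1) / (2 * n - 1) :=
    cfX_succ_eq_of_floor_eq h2 f2 (by push_cast; field_simp; linear_combination hx)
  have h4 : cfX x 4 = x + n :=
    cfX_succ_eq_of_floor_eq h3 f3 (by push_cast; field_simp; linear_combination hx)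
  have h5 : cfX x 5 = (x + n) / (2 * n - 1) :=
    cfX_succ_eq_of_floor_eq h4 f4 (by push_cast; field_simp; linear_combination hx)
  exact ⟨h1, h2, h3, h4, h5.trans h1.symm⟩

theorem cfA_of_sq_eq (hn : 1 < n) (hx0 : 0 ≤ x) (hx : x ^ 2 = n ^ 2 + (2 * n - 1)) :
    cfA x 0 = n ∧ cfA x 1 = 1 ∧ cfA x 2 = n - 1 ∧ cfA x 3 = 1 ∧ cfA x 4 = 2 * n := by
  obtain ⟨f0, f1, f2, f3, f4⟩ := floor_complete_quotients_of_sq_eq hn hx0 hx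
  obtain ⟨h1, h2, h3, h4, -⟩ := cfX_complete_quotients_of_sq_eq hn hx0 hx
  exact ⟨f0, by rw [cfA, h1, f1], by rw [cfA, h2, f2], by rw [cfA, h3, f3], by rw [cfA, h4, f4]⟩

end

/-- For `n > 1`, `√(n²+2n-1) = [n; 1, n-1, 1, 2n repeated]`, with period of length 4. -/
theorem sqrt_sq_add_two_n_sub_one (n : ℕ) (hn : 1 < n) :
    cfA (Real.sqrt ((n : ℝ) ^ 2 + (2 * (n : ℝ) - 1))) 0 = n ∧
    (∀ k : ℕ,
      cfA (Real.sqrt ((n : ℝ) ^ 2 + (2 * (n : ℝ) - 1))) (4 * k + 1) = 1 ∧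
      cfA (Real.sqrt ((n : ℝ) ^ 2 + (2 * (n : ℝ) - 1))) (4 * k + 2) = (n : ℤ) - 1 ∧
      cfA (Real.sqrt ((n : ℝ) ^ 2 + (2 * (n : ℝ) - 1))) (4 * k + 3) = 1 ∧
      cfA (Real.sqrt ((n : ℝ) ^ 2 + (2 * (n : ℝ) - 1))) (4 * k + 4) = 2 * n) ∧
    sInf {p : ℕ | 0 < p ∧ ∀ m : ℕ, 1 ≤ m →
      cfA (Real.sqrt ((n : ℝ) ^ 2 + (2 * (n : ℝ) - 1))) (m + p) = cfA (Real.sqrt ((n : ℝ) ^ 2 + (2 * (n : ℝ) - 1))) m} = 4 := by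
  set x := Real.sqrt ((n : ℝ) ^ 2 + (2 * (n : ℝ) - 1))
  have hn' : (1 : ℝ) ≤ n := by exact_mod_cast hn.le
  have hx : x ^ 2 = n ^ 2 + (2 * n - 1) := Real.sq_sqrt (by nlinarith)
  have hx0 : 0 ≤ x := Real.sqrt_nonneg _
  obtain ⟨a0, a1, a2, a3, a4⟩ := cfA_of_sq_eq hn hx0 hx
  have hper : ∀ i, 1 ≤ i → ∀ k, cfA x (i + 4 * k) = cfA x i :=
    fun i hi => cfA_add_mul_of_eq (cfX_complete_quotients_of_sq_eq hn hx0 hx).2.2.2.2 hi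
  refine ⟨a0, fun k => ?_, ?_⟩
  · simp only [add_comm (4 * k)]
    rw [hper 1 le_rfl, hper 2 (by norm_num), hper 3 (by norm_num), hper 4 (by norm_num)]
    exact ⟨a1, a2, a3, a4⟩
  · refine sInf_periods_eq _ (by norm_num) (fun m hm => by simpa using hper m hm 1) ?_
    intro q hq hq4
    interval_cases q <;> simp only [Nat.reduceSub, a1, a2, a3, a4, ne_eq] <;> omega
end
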